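/- For a, ω ∈ ℝ, the bicomplex Laplace transform of f(t) = e^{-at}cos(ωt) equals (ξ + a)((ξ+a)² + ω²)⁻¹ for all ξ = ξ₁e₁ + ξ₂e₂ with Re(ξ₁) > -a, Re(ξ₂) > -a and (ξ+a)² + ω² invertible. -/

import Mathlib

open MeasureTheory Set

noncomputable section

/-- Bicomplex numbers, modeled in idempotent coordinates as pairs `(ξ₁, ξ₂)` of
complex numbers (multiplication on `ℂ × ℂ` is componentwise, which is exactly
bicomplex multiplication in idempotent coordinates). -/
abbrev C2 := ℂ × ℂ

namespace C2

/-- The imaginary unit `i₁` of the bicomplex numbers. -/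
def i1 : C2 := (Complex.I, Complex.I)

/-- The imaginary unit `i₂` of the bicomplex numbers. -/
def i2 : C2 := (-Complex.I, Complex.I)

/-- The idempotent `e₁ = (1 + i₁i₂)/2`. -/
def e1 : C2 := (1 + i1 * i2) / 2

/-- The idempotent `e₂ = (1 - i₁i₂)/2`. -/
def e2 : C2 := (1 - i1 * i2) / 2

/-- Embedding of `ℂ` (the `i₁`-copy of the complex numbers) into `C2`. -/
def oc (z : ℂ) : C2 := (z, z)

/-- The bicomplex number `z₁ + i₂ z₂`. -/
def bmk (z₁ z₂ : ℂ) : C2 := oc z₁ + oc z₂ * i2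

/-- First idempotent projection. -/
def P1 (ξ : C2) : ℂ := ξ.1

/-- Second idempotent projection. -/
def P2 (ξ : C2) : ℂ := ξ.2

/-- First cartesian component: `z₁` in `ξ = z₁ + i₂ z₂`. -/
def z1 (ξ : C2) : ℂ := (ξ.1 + ξ.2) / 2

/-- Second cartesian component: `z₂` in `ξ = z₁ + i₂ z₂`. -/
def z2 (ξ : C2) : ℂ := Complex.I * (ξ.1 - ξ.2) / 2

/-- The bicomplex (Euclidean) norm `‖z₁ + i₂ z₂‖ = √(|z₁|² + |z₂|²)`. -/
def bnorm (ξ : C2) : ℝ := Real.sqrt (‖z1 ξ‖ ^ 2 + ‖z2 ξ‖ ^ 2)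

/-- The bicomplex exponential (computed via idempotent components). -/
def bexp (ξ : C2) : C2 := (Complex.exp ξ.1, Complex.exp ξ.2)

/-- The bicomplex Laplace transform `F(ξ) = ∫₀^∞ f(t) e^{-ξt} dt`. -/
def laplace (f : ℝ → ℝ) (ξ : C2) : C2 := ∫ t in Set.Ici (0 : ℝ), f t • bexp (-(t • ξ))

end C2

open C2

/-! In idempotent coordinates bicomplex arithmetic, the exponential and the integral all act
componentwise, so the transform at `ξ₁ e₁ + ξ₂ e₂` is the pair of complex Laplace transforms
at `ξ₁` and `ξ₂`. Each of these is computed by writing `cos (ω t)` as `(e^{iωt} + e^{-iωt}) / 2`,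
which turns the integrand into two exponentials `e^{c t}` with `Re c = -(Re s + a) < 0`, and
`1 / (s + a - iω) + 1 / (s + a + iω) = 2 (s + a) / ((s + a)² + ω²)`. -/

namespace C2

theorem e1_eq : e1 = (1, 0) := by
  simp [e1, i1, i2, Prod.ext_iff, Complex.I_mul_I]

theorem e2_eq : e2 = (0, 1) := by
  simp [e2, i1, i2, Prod.ext_iff, Complex.I_mul_I]

theorem oc_mul_e1_add_oc_mul_e2 (ξ₁ ξ₂ : ℂ) : oc ξ₁ * e1 + oc ξ₂ * e2 = (ξ₁, ξ₂) := by
  simp [e1_eq, e2_eq, oc]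

theorem laplace_mk (f : ℝ → ℝ) (ξ₁ ξ₂ : ℂ)
    (h₁ : IntegrableOn (fun t : ℝ => f t • Complex.exp (-(t * ξ₁))) (Ioi 0))
    (h₂ : IntegrableOn (fun t : ℝ => f t • Complex.exp (-(t * ξ₂))) (Ioi 0)) :
    laplace f (ξ₁, ξ₂) =
      (∫ t in Ioi 0, f t • Complex.exp (-(t * ξ₁)), ∫ t in Ioi 0, f t • Complex.exp (-(t * ξ₂))) := by
  rw [laplace, integral_Ici_eq_integral_Ioi, ← integral_pair h₁ h₂]
  rfl

end C2

open Complex in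
theorem exp_mul_cos_smul_cexp_eq_add (a ω t : ℝ) (s : ℂ) :
    (Real.exp (-a * t) * Real.cos (ω * t)) • exp (-(t * s)) =
      exp ((-(s + a) + ω * I) * t) / 2 + exp ((-(s + a) - ω * I) * t) / 2 := by
  rw [real_smul]
  push_cast
  rw [cos, show (-(s + a) + ω * I) * t = -a * t + ω * t * I + -(t * s) by ring,
    show (-(s + a) - ω * I) * t = -a * t + -(ω * t) * I + -(t * s) by ring]
  simp only [exp_add]
  ring

theorem integrableOn_exp_mul_cos_smul_cexp (a ω : ℝ) {s : ℂ} (hs : -a < s.re) :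
    IntegrableOn (fun t : ℝ => (Real.exp (-a * t) * Real.cos (ω * t)) • Complex.exp (-(t * s)))
      (Ioi 0) := by
  have hc₁ : (-(s + a) + ω * Complex.I).re < 0 := by simpa using hs
  have hc₂ : (-(s + a) - ω * Complex.I).re < 0 := by simpa using hs
  simp_rw [exp_mul_cos_smul_cexp_eq_add a ω _ s]
  exact ((integrableOn_exp_mul_complex_Ioi hc₁ 0).div_const 2).add
    ((integrableOn_exp_mul_complex_Ioi hc₂ 0).div_const 2)

theorem integral_exp_mul_cos_smul_cexp (a ω : ℝ) {s : ℂ} (hs : -a < s.re) :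
    ∫ t in Ioi 0, (Real.exp (-a * t) * Real.cos (ω * t)) • Complex.exp (-(t * s)) =
      (s + a) / ((s + a) ^ 2 + ω ^ 2) := by
  set c₁ : ℂ := -(s + a) + ω * Complex.I
  set c₂ : ℂ := -(s + a) - ω * Complex.I
  have hc₁ : c₁.re < 0 := by simpa [c₁] using hs
  have hc₂ : c₂.re < 0 := by simpa [c₂] using hs
  simp_rw [exp_mul_cos_smul_cexp_eq_add a ω _ s]
  rw [integral_add ((integrableOn_exp_mul_complex_Ioi hc₁ 0).div_const 2)
      ((integrableOn_exp_mul_complex_Ioi hc₂ 0).div_const 2),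
    integral_div, integral_div, integral_exp_mul_complex_Ioi hc₁, integral_exp_mul_complex_Ioi hc₂]
  simp only [Complex.ofReal_zero, mul_zero, Complex.exp_zero]
  have hne₁ : c₁ ≠ 0 := fun h => by simp [h] at hc₁
  have hne₂ : c₂ ≠ 0 := fun h => by simp [h] at hc₂
  have hprod : (s + a) ^ 2 + ω ^ 2 = c₁ * c₂ := by
    linear_combination (ω : ℂ) ^ 2 * Complex.I_sq
  rw [hprod]
  field_simp
  simp only [c₁, c₂]
  ring

theorem stmt16_general (a ω : ℝ) (ξ₁ ξ₂ : ℂ) (h1 : -a < ξ₁.re) (h2 : -a < ξ₂.re) :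
    laplace (fun t => Real.exp (-a * t) * Real.cos (ω * t)) (oc ξ₁ * e1 + oc ξ₂ * e2) =
      (oc ξ₁ * e1 + oc ξ₂ * e2 + oc (a : ℂ)) *
        ((oc ξ₁ * e1 + oc ξ₂ * e2 + oc (a : ℂ)) ^ 2 + oc (ω : ℂ) ^ 2)⁻¹ := by
  rw [oc_mul_e1_add_oc_mul_e2,
    laplace_mk _ _ _ (integrableOn_exp_mul_cos_smul_cexp a ω h1)
      (integrableOn_exp_mul_cos_smul_cexp a ω h2),
    integral_exp_mul_cos_smul_cexp a ω h1, integral_exp_mul_cos_smul_cexp a ω h2]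
  ext <;> simp [oc, div_eq_mul_inv]

theorem stmt16 (a ω : ℝ) (ξ₁ ξ₂ : ℂ) (h1 : -a < ξ₁.re) (h2 : -a < ξ₂.re)
    (hu : IsUnit ((oc ξ₁ * e1 + oc ξ₂ * e2 + oc (a : ℂ)) ^ 2 + oc (ω : ℂ) ^ 2)) :
    laplace (fun t => Real.exp (-a * t) * Real.cos (ω * t)) (oc ξ₁ * e1 + oc ξ₂ * e2) =
      (oc ξ₁ * e1 + oc ξ₂ * e2 + oc (a : ℂ)) *
        ((oc ξ₁ * e1 + oc ξ₂ * e2 + oc (a : ℂ)) ^ 2 + oc (ω : ℂ) ^ 2)⁻¹ :=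
  stmt16_general a ω ξ₁ ξ₂ h1 h2
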